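/- Let A be a k-algebra and K a purely inseparable field extension of k. Then K ⊗_k A is a strong S-ring (respectively, catenarian) if and only if A is a strong S-ring (respectively, catenarian). -/

import Mathlib

open Polynomial TensorProduct

/-- A ring satisfies MPC if its minimal primes are pairwise comaximal. -/
def MPC (A : Type*) [CommRing A] : Prop :=
  ∀ p ∈ minimalPrimes A, ∀ q ∈ minimalPrimes A, p ≠ q → p ⊔ q = ⊤

/-- A domain is an S-domain if every height-one prime `p` satisfies `ht (p[X]) = 1`. -/
def IsSDomain (D : Type*) [CommRing D] [IsDomain D] : Prop :=
  ∀ p : PrimeSpectrum D, Order.height p = 1 →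
    ∀ P : PrimeSpectrum D[X], P.asIdeal = p.asIdeal.map (C : D →+* D[X]) →
      Order.height P = 1

/-- A ring is a strong S-ring if the quotient by every prime is an S-domain. -/
def StrongSRing (A : Type*) [CommRing A] : Prop :=
  ∀ p : PrimeSpectrum A, IsSDomain (A ⧸ p.asIdeal)

/-- A ring is a stably strong S-ring if all polynomial rings over it in `n ≥ 1`
variables are strong S-rings. -/
def StablyStrongSRing (A : Type*) [CommRing A] : Prop :=
  ∀ n : ℕ, 0 < n → StrongSRing (MvPolynomial (Fin n) A)

/-- A ring is locally finite dimensional (LFD) if every prime has finite height. -/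
def LFD (A : Type*) [CommRing A] : Prop :=
  ∀ p : PrimeSpectrum A, Order.height p ≠ ⊤

/-- A ring is catenarian if it satisfies MPC, is LFD, and adjacent primes `P ⋖ Q`
satisfy `ht Q = ht P + 1`. -/
def Catenarian (A : Type*) [CommRing A] : Prop :=
  MPC A ∧ LFD A ∧
    ∀ P Q : PrimeSpectrum A, P ⋖ Q → Order.height Q = Order.height P + 1

/-- A ring is universally catenarian if all polynomial rings over it in `n ≥ 1`
variables are catenarian. -/
def UniversallyCatenarian (A : Type*) [CommRing A] : Prop :=
  ∀ n : ℕ, 0 < n → Catenarian (MvPolynomial (Fin n) A)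

/-- An S-ring: MPC together with the quotient by each minimal prime being an S-domain. -/
def SRing (A : Type*) [CommRing A] : Prop :=
  MPC A ∧ ∀ p : PrimeSpectrum A, p.asIdeal ∈ minimalPrimes A → IsSDomain (A ⧸ p.asIdeal)

/-- The transcendence degree of a `k`-algebra `A`: the supremum of the cardinalities
of algebraically independent subsets of `A` over `k`. -/
noncomputable def trdeg (k A : Type*) [CommRing k] [CommRing A] [Algebra k A] : Cardinal :=
  ⨆ s : {s : Set A // AlgebraicIndependent k ((↑) : s → A)}, Cardinal.mk s.1

/-!
Let `q` be the exponential characteristic of `k`. The map `A → K ⊗ₖ A` is injective and some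
`q ^ n`-th power of every element of `K ⊗ₖ A` lies in its image. Such a radicial map induces an
order isomorphism of prime spectra: `comap` reflects inclusions because primes are radical, and it
is surjective by integrality. Radiciality passes to `A ⧸ (P ∩ A) → (K ⊗ₖ A) ⧸ P` and, because
`x ↦ x ^ q` is additive, to polynomial rings, compatibly with `p ↦ p[X]`. Catenarity only depends
on the poset of primes, and being an S-domain only on the posets of primes of `D` and `D[X]`
together with `p ↦ p[X]`.
-/

open PrimeSpectrum

section Spectrum

variable {R S : Type*} [CommRing R] [CommRing S]

lemma mpc_iff :
    MPC R ↔ ∀ p q r : PrimeSpectrum R, IsMin p → IsMin q → p ≤ r → q ≤ r → p = q := by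
  constructor
  · intro h p q r hp hq hpr hqr
    by_contra hne
    refine r.isPrime.ne_top (top_le_iff.1 ?_)
    rw [← h _ (isMin_iff.1 hp) _ (isMin_iff.1 hq) (mt PrimeSpectrum.ext hne)]
    exact sup_le hpr hqr
  · intro h p hp q hq hpq
    by_contra hne
    obtain ⟨m, hm, hle⟩ := Ideal.exists_le_maximal _ hne
    exact hpq (congrArg asIdeal (h ⟨p, hp.1.1⟩ ⟨q, hq.1.1⟩ ⟨m, hm.isPrime⟩ (isMin_iff.2 hp)
      (isMin_iff.2 hq) (le_sup_left.trans hle) (le_sup_right.trans hle)))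

lemma OrderIso.isMin_apply_iff {α β : Type*} [PartialOrder α] [PartialOrder β] (e : α ≃o β)
    {a : α} : IsMin (e a) ↔ IsMin a :=
  e.toInitialSeg.isMin_apply_iff (a := a)

lemma MPC.of_orderIso (e : PrimeSpectrum R ≃o PrimeSpectrum S) (h : MPC R) : MPC S := by
  rw [mpc_iff] at h ⊢
  intro p q r hp hq hpr hqr
  refine e.symm.injective (h _ _ (e.symm r) ?_ ?_ (e.symm.monotone hpr) (e.symm.monotone hqr))
  exacts [e.symm.isMin_apply_iff.2 hp, e.symm.isMin_apply_iff.2 hq]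

lemma Catenarian.of_orderIso (e : PrimeSpectrum R ≃o PrimeSpectrum S) (h : Catenarian R) :
    Catenarian S := by
  obtain ⟨hmpc, hlfd, hcov⟩ := h
  refine ⟨hmpc.of_orderIso e, fun p => ?_, fun P Q hPQ => ?_⟩
  · simpa only [Order.height_orderIso] using hlfd (e.symm p)
  · simpa only [Order.height_orderIso] using hcov _ _ ((apply_covBy_apply_iff e.symm).2 hPQ)

lemma catenarian_congr (e : PrimeSpectrum R ≃o PrimeSpectrum S) : Catenarian R ↔ Catenarian S :=
  ⟨.of_orderIso e, .of_orderIso e.symm⟩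

end Spectrum

noncomputable def PrimeSpectrum.polynomialExtension {D : Type*} [CommRing D]
    (p : PrimeSpectrum D) : PrimeSpectrum D[X] :=
  ⟨p.asIdeal.map C, Ideal.isPrime_map_C_of_isPrime⟩

lemma PrimeSpectrum.comap_mapRingHom_polynomialExtension {R S : Type*} [CommRing R] [CommRing S]
    (f : R →+* S) (P : PrimeSpectrum S) :
    comap (mapRingHom f) P.polynomialExtension = (comap f P).polynomialExtension := by
  ext g
  simp [polynomialExtension, Ideal.mem_map_C_iff]

lemma isSDomain_iff {D : Type*} [CommRing D] [IsDomain D] :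
    IsSDomain D ↔ ∀ p : PrimeSpectrum D,
      Order.height p = 1 → Order.height p.polynomialExtension = 1 := by
  refine ⟨fun h p hp => h p hp _ rfl, fun h p hp P hP => ?_⟩
  obtain rfl : P = p.polynomialExtension := PrimeSpectrum.ext hP
  exact h p hp

structure RingHom.IsRadicial (q : ℕ) {R S : Type*} [CommRing R] [CommRing S] (f : R →+* S) :
    Prop where
  injective : Function.Injective f
  exists_pow_mem_range (x : S) : ∃ n, x ^ q ^ n ∈ f.range

namespace RingHom.IsRadicial

variable {q : ℕ} {R S : Type*} [CommRing R] [CommRing S] {f : R →+* S}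

lemma le_of_comap_le [NeZero q] (h : f.IsRadicial q) {P Q : Ideal S} [Q.IsPrime]
    (hle : P.comap f ≤ Q.comap f) : P ≤ Q := by
  intro x hx
  obtain ⟨n, b, hb⟩ := h.exists_pow_mem_range x
  have hb_mem : b ∈ P.comap f := by
    rw [Ideal.mem_comap, hb]
    exact P.pow_mem_of_mem hx _ (pow_pos (Nat.pos_of_neZero q) n)
  exact ‹Q.IsPrime›.mem_of_pow_mem (q ^ n) (hb ▸ hle hb_mem)

lemma comap_surjective [NeZero q] (h : f.IsRadicial q) : Function.Surjective (comap f) :=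
  (isHomeomorph_comap f (fun x =>
    let ⟨n, hn⟩ := h.exists_pow_mem_range x
    ⟨q ^ n, pow_pos (Nat.pos_of_neZero q) n, hn⟩)
    (by simp [(injective_iff_ker_eq_bot f).1 h.injective])).surjective

noncomputable def primeSpectrumOrderIso [NeZero q] (h : f.IsRadicial q) :
    PrimeSpectrum S ≃o PrimeSpectrum R :=
  RelIso.ofSurjective (OrderEmbedding.ofMapLEIff (comap f) fun _ Q =>
    ⟨h.le_of_comap_le (Q := Q.asIdeal), fun hle => Ideal.comap_mono hle⟩) h.comap_surjective

lemma polynomial [ExpChar S q] (h : f.IsRadicial q) : (Polynomial.mapRingHom f).IsRadicial q := by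
  let := (Polynomial.mapRingHom f).toAlgebra
  refine ⟨Polynomial.map_injective f h.injective, fun g => ?_⟩
  suffices g ∈ Subalgebra.perfectClosure R[X] S[X] q from this
  induction g using Polynomial.induction_on' with
  | add g g' hg hg' => exact add_mem hg hg'
  | monomial n a =>
    obtain ⟨m, b, hb⟩ := h.exists_pow_mem_range a
    exact ⟨m, monomial (n * q ^ m) b, by simp [RingHom.algebraMap_toAlgebra, hb, monomial_pow]⟩

lemma quotientMap (h : f.IsRadicial q) (P : Ideal S) :
    (Ideal.quotientMap P f le_rfl).IsRadicial q := by
  refine ⟨Ideal.quotientMap_injective, fun x => ?_⟩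
  obtain ⟨y, rfl⟩ := Ideal.Quotient.mk_surjective x
  obtain ⟨n, b, hb⟩ := h.exists_pow_mem_range y
  exact ⟨n, Ideal.Quotient.mk _ b, by rw [Ideal.quotientMap_mk, hb, map_pow]⟩

lemma isSDomain_iff [IsDomain R] [IsDomain S] [ExpChar S q] (h : f.IsRadicial q) :
    IsSDomain S ↔ IsSDomain R := by
  have : NeZero q := ⟨(expChar_pos S q).ne'⟩
  let e := h.primeSpectrumOrderIso
  let eX := h.polynomial.primeSpectrumOrderIso
  have he (p : PrimeSpectrum S) : eX p.polynomialExtension = (e p).polynomialExtension :=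
    comap_mapRingHom_polynomialExtension f p
  rw [_root_.isSDomain_iff, _root_.isSDomain_iff]
  refine e.toEquiv.forall_congr fun p => ?_
  rw [show e.toEquiv p = e p from rfl, ← he, Order.height_orderIso, Order.height_orderIso]

/-- The base field makes every `S ⧸ P` have exponential characteristic `q`. -/
lemma strongSRing_iff (k : Type*) [Field k] [ExpChar k q] [Algebra k S] (h : f.IsRadicial q) :
    StrongSRing S ↔ StrongSRing R := by
  have : NeZero q := ⟨(expChar_pos k q).ne'⟩
  have hquot (P : PrimeSpectrum S) :
      IsSDomain (S ⧸ P.asIdeal) ↔ IsSDomain (R ⧸ (comap f P).asIdeal) :=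
    have := expChar_of_injective_algebraMap (algebraMap k (S ⧸ P.asIdeal)).injective q
    (h.quotientMap P.asIdeal).isSDomain_iff
  refine ⟨fun hS p => ?_, fun hR P => (hquot P).2 (hR _)⟩
  obtain ⟨P, rfl⟩ := h.comap_surjective p
  exact (hquot P).1 (hS P)

end RingHom.IsRadicial

lemma IsPurelyInseparable.isRadicial_includeRight (k K A : Type*) [Field k] [Field K]
    [Algebra k K] [IsPurelyInseparable k K] [CommRing A] [Algebra k A] (q : ℕ) [ExpChar k q] :
    (Algebra.TensorProduct.includeRight : A →ₐ[k] K ⊗[k] A).toRingHom.IsRadicial q where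
  injective := Algebra.TensorProduct.includeRight_injective (algebraMap k K).injective
  exists_pow_mem_range x := by
    obtain ⟨n, a, ha⟩ := exists_pow_pow_mem_range_tensorProduct_of_expChar q
      (Algebra.TensorProduct.comm k K A x)
    refine ⟨n, a, (Algebra.TensorProduct.comm k K A).injective ?_⟩
    simpa using ha

theorem stmt16_general {k K A : Type*} [Field k] [Field K] [Algebra k K]
    [IsPurelyInseparable k K] [CommRing A] [Algebra k A] :
    (StrongSRing (K ⊗[k] A) ↔ StrongSRing A) ∧
    (Catenarian (K ⊗[k] A) ↔ Catenarian A) := by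
  let q := ringExpChar k
  have : NeZero q := ⟨(expChar_pos k q).ne'⟩
  have h := IsPurelyInseparable.isRadicial_includeRight k K A q
  exact ⟨h.strongSRing_iff k, catenarian_congr h.primeSpectrumOrderIso⟩

/-- For a purely inseparable field extension `K/k`, the ring
`K ⊗ₖ A` is a strong S-ring (resp. catenarian) iff `A` is. -/
theorem stmt16 {k K A : Type*} [Field k] [Field K] [Algebra k K]
    [IsPurelyInseparable k K] [CommRing A] [Nontrivial A] [Algebra k A] :
    (StrongSRing (K ⊗[k] A) ↔ StrongSRing A) ∧
    (Catenarian (K ⊗[k] A) ↔ Catenarian A) :=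
  stmt16_general
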